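/- For every positive integer n, every nonzero m in (-1,1), and every measurable set K ⊆ [-1,1]^n with positive volume whose barycenter equals m·(1,...,1), one has vol(K)^{1/n} < 2 sqrt(1 - m^2). -/

import Mathlib

/-!
Exponential tilting. For `K ⊆ [-1,1]^n` with barycenter `m·1_n` and any `l`, the inequality
`1 + t ≤ eᵗ` applied to `t = l ∑ᵢ (xᵢ - m)`, whose integral over `K` vanishes, gives
`vol K ≤ ∫_K e^{l ∑ᵢ (xᵢ - m)} ≤ ∫_{[-1,1]^n} e^{l ∑ᵢ (xᵢ - m)} = (∫_{-1}^1 e^{l(t-m)} dt)^n`.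
The one-dimensional factor equals `2 e^{-lm} sinh l / l`, and a suitable `l` (`3m` for small
`|m|`, `1/(1-m)` otherwise) makes it smaller than `2√(1-m²)` as soon as `m ≠ 0`.
-/

open MeasureTheory Set Real
open scoped Nat

theorem Nat.six_pow_mul_factorial_le_factorial_two_mul_add_one (n : ℕ) :
    6 ^ n * n ! ≤ (2 * n + 1)! := by
  induction n with
  | zero => simp
  | succ n ih =>
    calc 6 ^ (n + 1) * (n + 1)! = 6 * (n + 1) * (6 ^ n * n !) := by
          rw [factorial_succ, pow_succ]; ring
      _ ≤ (2 * n + 3) * (2 * n + 2) * (2 * n + 1)! := Nat.mul_le_mul (by nlinarith) ih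
      _ = (2 * n + 1 + 1 + 1)! := by
          rw [factorial_succ (2 * n + 1 + 1), factorial_succ (2 * n + 1)]; ring

theorem Real.sinh_le_mul_exp_sq_div_six {x : ℝ} (hx : 0 ≤ x) :
    sinh x ≤ x * exp (x ^ 2 / 6) := by
  have hexp := (NormedSpace.expSeries_div_hasSum_exp (x ^ 2 / 6)).mul_left x
  rw [← Real.exp_eq_exp_ℝ] at hexp
  refine hasSum_le (fun n ↦ ?_) x.hasSum_sinh hexp
  rw [div_pow, ← pow_mul, div_div, pow_succ, mul_comm _ x, mul_div_assoc]
  gcongr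
  exact_mod_cast Nat.six_pow_mul_factorial_le_factorial_two_mul_add_one n

theorem exp_neg_mul_sinh_div_lt_sqrt_of_le_half {μ : ℝ} (h0 : 0 < μ) (h : μ ≤ 1 / 2) :
    exp (-(3 * μ * μ)) * sinh (3 * μ) / (3 * μ) < √(1 - μ ^ 2) := by
  have hsinh : sinh (3 * μ) / (3 * μ) ≤ exp (3 * μ ^ 2 / 2) := by
    rw [div_le_iff₀ (by positivity), mul_comm (exp _),
      show 3 * μ ^ 2 / 2 = (3 * μ) ^ 2 / 6 by ring]
    exact Real.sinh_le_mul_exp_sq_div_six (by positivity)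
  have hexp : 1 + 3 * μ ^ 2 ≤ exp (3 * μ ^ 2) := by linarith [add_one_le_exp (3 * μ ^ 2)]
  have hμ2 : 0 < 1 - μ ^ 2 := by nlinarith
  have hμ4 : μ ^ 2 * μ ^ 2 ≤ μ ^ 2 * (1 / 4) := by gcongr; nlinarith
  calc exp (-(3 * μ * μ)) * sinh (3 * μ) / (3 * μ)
      ≤ exp (-(3 * μ * μ)) * exp (3 * μ ^ 2 / 2) := by
        rw [mul_div_assoc]; gcongr
    _ = exp (-(3 * μ ^ 2 / 2)) := by rw [← exp_add]; congr 1; ring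
    _ < √(1 - μ ^ 2) := by
        rw [lt_sqrt (exp_pos _).le, ← exp_nat_mul,
          show (2 : ℕ) * -(3 * μ ^ 2 / 2) = -(3 * μ ^ 2) by push_cast; ring, exp_neg,
          inv_lt_iff_one_lt_mul₀ (exp_pos _)]
        nlinarith [mul_le_mul_of_nonneg_left hexp hμ2.le, pow_pos h0 2]

theorem exp_neg_mul_sinh_div_lt_sqrt_of_half_lt {μ : ℝ} (h : 1 / 2 < μ) (h1 : μ < 1) :
    exp (-(1 / (1 - μ) * μ)) * sinh (1 / (1 - μ)) / (1 / (1 - μ)) < √(1 - μ ^ 2) := by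
  have h1μ : 0 < 1 - μ := by linarith
  have hsinh : sinh (1 / (1 - μ)) < exp (1 / (1 - μ)) / 2 := by
    rw [sinh_eq]; gcongr; linarith [exp_pos (-(1 / (1 - μ)))]
  have he : exp (-(1 / (1 - μ) * μ)) * exp (1 / (1 - μ)) = exp 1 := by
    rw [← exp_add]; congr 1; field_simp; ring
  have he2 : exp 1 ^ 2 * (1 - μ) ^ 2 ≤ 9 * (1 - μ) ^ 2 := by
    gcongr; nlinarith [exp_one_lt_three, exp_pos 1]
  calc exp (-(1 / (1 - μ) * μ)) * sinh (1 / (1 - μ)) / (1 / (1 - μ))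
      < exp (-(1 / (1 - μ) * μ)) * (exp (1 / (1 - μ)) / 2) / (1 / (1 - μ)) := by gcongr
    _ = exp 1 * (1 - μ) / 2 := by rw [← he]; field_simp
    _ ≤ √(1 - μ ^ 2) := by
        rw [le_sqrt (by positivity) (by nlinarith)]
        nlinarith

theorem exists_exp_neg_mul_sinh_div_lt_sqrt {μ : ℝ} (h0 : μ ≠ 0) (h1 : |μ| < 1) :
    ∃ l ≠ 0, exp (-(l * μ)) * sinh l / l < √(1 - μ ^ 2) := by
  wlog hμ : 0 < μ generalizing μ
  · obtain ⟨l, hl, hlt⟩ := this (neg_ne_zero.2 h0) (by rwa [abs_neg])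
      (neg_pos.2 (lt_of_le_of_ne (not_lt.1 hμ) h0))
    refine ⟨-l, neg_ne_zero.2 hl, ?_⟩
    rw [sinh_neg, mul_neg, neg_div_neg_eq, neg_mul_comm, ← neg_sq]
    exact hlt
  rw [abs_of_pos hμ] at h1
  rcases le_or_gt μ (1 / 2) with hle | hlt
  · exact ⟨3 * μ, by positivity, exp_neg_mul_sinh_div_lt_sqrt_of_le_half hμ hle⟩
  · have h1μ : 0 < 1 - μ := by linarith
    exact ⟨1 / (1 - μ), by positivity, exp_neg_mul_sinh_div_lt_sqrt_of_half_lt hlt h1⟩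

theorem integral_Icc_exp_mul_sub (l μ : ℝ) (hl : l ≠ 0) :
    ∫ t in Icc (-1 : ℝ) 1, exp (l * (t - μ)) = 2 * (exp (-(l * μ)) * sinh l / l) := by
  have hsplit : (fun t ↦ exp (l * (t - μ))) = fun t ↦ exp (-(l * μ)) * exp (l * t) := by
    funext t; rw [← exp_add]; ring_nf
  rw [integral_Icc_eq_integral_Ioc, ← intervalIntegral.integral_of_le (by norm_num), hsplit,
    intervalIntegral.integral_const_mul, intervalIntegral.integral_comp_mul_left _ hl,
    integral_exp, sinh_eq, smul_eq_mul, mul_neg, mul_one]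
  field_simp

theorem exists_integral_Icc_exp_mul_sub_lt {μ : ℝ} (h0 : μ ≠ 0) (h1 : |μ| < 1) :
    ∃ l, ∫ t in Icc (-1 : ℝ) 1, exp (l * (t - μ)) < 2 * √(1 - μ ^ 2) := by
  obtain ⟨l, hl, hlt⟩ := exists_exp_neg_mul_sinh_div_lt_sqrt h0 h1
  exact ⟨l, by rw [integral_Icc_exp_mul_sub l μ hl]; linarith⟩

theorem setIntegral_pi_Icc_prod_eq_pow {ι : Type*} [Fintype ι] (a b : ℝ) (g : ℝ → ℝ) :
    ∫ x in Icc (fun _ : ι ↦ a) (fun _ ↦ b), ∏ i, g (x i) =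
      (∫ t in Icc a b, g t) ^ Fintype.card ι := by
  rw [← pi_univ_Icc, volume_pi, Measure.restrict_pi_pi]
  exact integral_fintype_prod_eq_pow g

theorem measureReal_add_setIntegral_le_setIntegral_exp {α : Type*} [MeasurableSpace α]
    {μ : Measure α} {s : Set α} {f : α → ℝ} (hs : μ s ≠ ⊤) (hf : IntegrableOn f s μ)
    (hexp : IntegrableOn (fun x ↦ exp (f x)) s μ) :
    μ.real s + ∫ x in s, f x ∂μ ≤ ∫ x in s, exp (f x) ∂μ := by
  have h1 : IntegrableOn (fun _ ↦ (1 : ℝ)) s μ := integrableOn_const hs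
  calc μ.real s + ∫ x in s, f x ∂μ = ∫ x in s, (1 + f x) ∂μ := by
        rw [integral_add h1 hf, setIntegral_const, smul_eq_mul, mul_one]
    _ ≤ ∫ x in s, exp (f x) ∂μ :=
        setIntegral_mono (h1.add hf) hexp fun x ↦ by linarith [add_one_le_exp (f x)]

theorem measureReal_le_integral_Icc_exp_pow {ι : Type*} [Fintype ι] {K : Set (ι → ℝ)}
    (hKsub : K ⊆ Icc (fun _ ↦ -1) (fun _ ↦ 1)) {m : ℝ}
    (hbar : ∫ x in K, ∑ i, (x i - m) = 0) (l : ℝ) :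
    volume.real K ≤ (∫ t in Icc (-1 : ℝ) 1, exp (l * (t - m))) ^ Fintype.card ι := by
  set f : (ι → ℝ) → ℝ := fun x ↦ l * ∑ i, (x i - m)
  have hf : Continuous f := by fun_prop
  have hKfin : volume K ≠ ⊤ := (isCompact_Icc.isBounded.subset hKsub).measure_lt_top.ne
  have hexp : IntegrableOn (fun x ↦ exp (f x)) (Icc (fun _ ↦ -1) (fun _ ↦ 1)) :=
    (continuous_exp.comp hf).integrableOn_Icc
  calc volume.real K = volume.real K + ∫ x in K, f x := by
        rw [integral_const_mul, hbar, mul_zero, add_zero]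
    _ ≤ ∫ x in K, exp (f x) := measureReal_add_setIntegral_le_setIntegral_exp hKfin
        (hf.integrableOn_Icc.mono_set hKsub) (hexp.mono_set hKsub)
    _ ≤ ∫ x in Icc (fun _ ↦ -1) (fun _ ↦ 1), exp (f x) :=
        setIntegral_mono_set hexp (ae_of_all _ fun _ ↦ (exp_pos _).le) hKsub.eventuallyLE
    _ = _ := by
        simp_rw [f, Finset.mul_sum, exp_sum]
        exact setIntegral_pi_Icc_prod_eq_pow (-1) 1 fun t ↦ exp (l * (t - m))

theorem setIntegral_sum_sub_eq_zero_of_barycenter {ι : Type*} [Fintype ι]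
    {μ : Measure (ι → ℝ)} {K : Set (ι → ℝ)} (hint : IntegrableOn (fun x ↦ x) K μ)
    (hV : μ.real K ≠ 0) {m : ℝ} (hbar : (μ.real K)⁻¹ • ∫ x in K, x ∂μ = fun _ ↦ m) :
    ∫ x in K, ∑ i, (x i - m) ∂μ = 0 := by
  have hKfin : μ K ≠ ⊤ := (ENNReal.toReal_ne_zero.1 hV).2
  have hcoord (i : ι) : ∫ x in K, x i ∂μ = μ.real K * m := by
    rw [← eval_integral hint.eval, ← congrFun hbar i, Pi.smul_apply, smul_eq_mul,
      mul_inv_cancel_left₀ hV]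
  have hint_sub (i : ι) : IntegrableOn (fun x ↦ x i - m) K μ :=
    (hint.eval i).sub (integrableOn_const hKfin)
  rw [integral_finsetSum _ fun i _ ↦ hint_sub i]
  refine Finset.sum_eq_zero fun i _ ↦ ?_
  rw [integral_sub (hint.eval i) (integrableOn_const hKfin), hcoord, setIntegral_const,
    smul_eq_mul, sub_self]

theorem isobarycentric_diagonal_general (n : ℕ) (hn : 0 < n) (m : ℝ)
    (hm : m ∈ Ioo (-1 : ℝ) 1) (hm0 : m ≠ 0)
    (K : Set (Fin n → ℝ))
    (hKsub : K ⊆ Icc (fun _ => -1 : Fin n → ℝ) (fun _ => 1))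
    (hKpos : 0 < volume K)
    (hbar : (volume K).toReal⁻¹ • (∫ x in K, x) = (fun _ => m : Fin n → ℝ)) :
    (volume K).toReal ^ ((1 : ℝ) / n) < 2 * Real.sqrt (1 - m ^ 2) := by
  obtain ⟨l, hl⟩ := exists_integral_Icc_exp_mul_sub_lt hm0 (abs_lt.2 hm)
  set B := ∫ t in Icc (-1 : ℝ) 1, exp (l * (t - m))
  have hB : 0 ≤ B := setIntegral_nonneg measurableSet_Icc fun _ _ ↦ (exp_pos _).le
  have hKfin : volume K ≠ ⊤ := (isCompact_Icc.isBounded.subset hKsub).measure_lt_top.ne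
  have hV : volume.real K ≠ 0 := (ENNReal.toReal_pos hKpos.ne' hKfin).ne'
  have hint : IntegrableOn (fun x ↦ x) K := continuous_id.integrableOn_Icc.mono_set hKsub
  have hVB : volume.real K ≤ B ^ n := by
    simpa using measureReal_le_integral_Icc_exp_pow hKsub
      (setIntegral_sum_sub_eq_zero_of_barycenter hint hV hbar) l
  calc (volume K).toReal ^ ((1 : ℝ) / n) ≤ (B ^ n) ^ ((1 : ℝ) / n) :=
        rpow_le_rpow ENNReal.toReal_nonneg hVB (by positivity)
    _ = B := by rw [one_div, pow_rpow_inv_natCast hB hn.ne']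
    _ < 2 * Real.sqrt (1 - m ^ 2) := hl

/-- For every positive integer `n`, every nonzero `m ∈ (-1,1)` and every measurable
`K ⊆ [-1,1]^n` of positive volume whose barycenter is `m·(1,…,1)`, one has
`vol(K)^(1/n) < 2√(1 - m²)`. -/
theorem isobarycentric_diagonal (n : ℕ) (hn : 0 < n) (m : ℝ)
    (hm : m ∈ Ioo (-1 : ℝ) 1) (hm0 : m ≠ 0)
    (K : Set (Fin n → ℝ)) (hK : MeasurableSet K)
    (hKsub : K ⊆ Icc (fun _ => -1 : Fin n → ℝ) (fun _ => 1))
    (hKpos : 0 < volume K)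
    (hbar : (volume K).toReal⁻¹ • (∫ x in K, x) = (fun _ => m : Fin n → ℝ)) :
    (volume K).toReal ^ ((1 : ℝ) / n) < 2 * Real.sqrt (1 - m ^ 2) :=
  isobarycentric_diagonal_general n hn m hm hm0 K hKsub hKpos hbar
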